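/- arXiv:2101.10026 — 2 statements merged into one kernel-verified Lean document; each statement's English description precedes it below -/
import Mathlib

section
/- Wavefront lemma (second part): under the assumptions of the wavefront lemma, if instead W(x) = 0 (so W vanishes on the whole interior d_re-ball of radius t0 = d_re(x,z) around z, and W(z) = 0), then u^W(z,t) = 0 for all t ≤ t0. -/
open Finset

variable {V : Type*} [Fintype V] [DecidableEq V]

noncomputable def lap (G : SimpleGraph V) [DecidableRel G.Adj] (μ : V → ℝ) (g : V → V → ℝ)
    (u : V → ℝ) (x : V) : ℝ :=
  (μ x)⁻¹ * ∑ y ∈ univ.filter (fun y => G.Adj x y), g x y * (u y - u x)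

noncomputable def nder (G : SimpleGraph V) [DecidableRel G.Adj] (B : Finset V) (μ : V → ℝ)
    (g : V → V → ℝ) (u : V → ℝ) (z : V) : ℝ :=
  (μ z)⁻¹ * ∑ x ∈ univ.filter (fun x => G.Adj x z ∧ x ∉ B), g x z * (u x - u z)

def IsWave (G : SimpleGraph V) [DecidableRel G.Adj] (B : Finset V) (μ : V → ℝ)
    (g : V → V → ℝ) (q : V → ℝ) (W : V → ℝ) (u : V → ℕ → ℝ) : Prop :=
  (∀ x, x ∉ B → ∀ t : ℕ, 1 ≤ t →
    (u x (t+1) - 2 * u x t + u x (t-1)) - lap G μ g (fun y => u y t) x + q x * u x t = 0) ∧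
  (∀ z ∈ B, ∀ t : ℕ, nder G B μ g (fun y => u y t) z = 0) ∧
  (∀ x, x ∉ B → u x 1 = u x 0) ∧
  (∀ x, u x 0 = W x)

def reduced (G : SimpleGraph V) (B : Finset V) : SimpleGraph V where
  Adj x y := G.Adj x y ∧ (x ∉ B ∨ y ∉ B)
  symm := ⟨fun _ _ h => ⟨h.1.symm, h.2.symm⟩⟩
  loopless := ⟨fun x h => G.loopless.irrefl x h.1⟩

def ExtremePt (G : SimpleGraph V) (B : Finset V) (S : Finset V) (x₀ : V) : Prop :=
  x₀ ∈ S ∧ ∃ z ∈ B, ∀ y ∈ S, y ≠ x₀ → G.edist z x₀ < G.edist z y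

def TwoPoints (G : SimpleGraph V) (B : Finset V) : Prop :=
  ∀ S : Finset V, (∀ v ∈ S, v ∉ B) → 2 ≤ S.card →
    ∃ x₀ x₁, x₀ ≠ x₁ ∧ ExtremePt G B S x₀ ∧ ExtremePt G B S x₁

/-! The wave vanishes on an interior `d_re`-ball that shrinks by one per time step after the first
(since `u(·,1) = u(·,0)`). At an interior vertex `y` the wave equation with vanishing neighbours
gives `u(y,s+2) = 0`; a boundary neighbour of `y` vanishes by the Neumann condition, because its
interior neighbours are adjacent to `y` and hence at most one step further from `z`. At the
boundary vertex `z` itself the Neumann condition again transports the vanishing of its interior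
neighbours, which lie at reduced distance `1`. -/

section Graph

variable {α : Type*} {G : SimpleGraph α} {B : Finset α}

theorem reduced_dist_le_add_one_of_adj_of_adj (hadj : ∀ z ∈ B, ∀ a b : α, a ∉ B → b ∉ B →
      G.Adj a z → G.Adj b z → a ≠ b → G.Adj a b)
    (z : α) {w a b : α} (hw : w ∈ B) (ha : a ∉ B) (hb : b ∉ B) (haw : G.Adj a w)
    (hbw : G.Adj b w) : (reduced G B).dist z b ≤ (reduced G B).dist z a + 1 := by
  obtain rfl | hab := eq_or_ne a b
  · omega
  have := SimpleGraph.Adj.diff_dist_adj (u := z)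
    (show (reduced G B).Adj a b from ⟨hadj w hw a b ha hb haw hbw hab, .inl ha⟩)
  omega

theorem exists_adj_notMem_of_reduced_reachable {z x : α} (h : (reduced G B).Reachable z x)
    (hz : z ∈ B) (hx : x ∉ B) : ∃ v, G.Adj v z ∧ v ∉ B := by
  obtain ⟨p⟩ := h
  have hzv := p.adj_snd (p.not_nil_of_ne (by rintro rfl; exact hx hz))
  exact ⟨p.snd, hzv.1.symm, hzv.2.resolve_left (not_not.mpr hz)⟩

theorem lap_eq_zero_of_forall_adj [Fintype α] [DecidableRel G.Adj] (μ : α → ℝ) (g : α → α → ℝ)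
    {f : α → ℝ} {y : α} (hy : f y = 0) (hf : ∀ w, G.Adj y w → f w = 0) : lap G μ g f y = 0 := by
  refine mul_eq_zero_of_right _ (sum_eq_zero fun w hw => ?_)
  rw [hf w (mem_filter.mp hw).2, hy, sub_zero, mul_zero]

end Graph

variable {G : SimpleGraph V} [DecidableRel G.Adj] {B : Finset V}

theorem eq_zero_of_nder_eq_zero {μ : V → ℝ} {g : V → V → ℝ} {f : V → ℝ} {w : V}
    (hμ : 0 < μ w) (hg : ∀ v, G.Adj v w → 0 < g v w) (hex : ∃ v, G.Adj v w ∧ v ∉ B)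
    (hf : ∀ v, G.Adj v w → v ∉ B → f v = 0) (h : nder G B μ g f w = 0) : f w = 0 := by
  set N := univ.filter (fun v => G.Adj v w ∧ v ∉ B)
  have hN : nder G B μ g f w = -((μ w)⁻¹ * ∑ v ∈ N, g v w) * f w := by
    rw [nder, sum_congr rfl fun v hv => by
      rw [hf v (mem_filter.mp hv).2.1 (mem_filter.mp hv).2.2]]
    rw [← sum_mul]
    ring
  have hpos : 0 < (μ w)⁻¹ * ∑ v ∈ N, g v w := by
    obtain ⟨v₀, hv₀⟩ := hex
    refine mul_pos (inv_pos.mpr hμ) (sum_pos (fun v hv => hg v (mem_filter.mp hv).2.1) ?_)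
    exact ⟨v₀, mem_filter.mpr ⟨mem_univ _, hv₀⟩⟩
  rw [hN] at h
  exact (mul_eq_zero.mp h).resolve_left (neg_ne_zero.mpr hpos.ne')

section IsWave

variable {μ : V → ℝ} {g : V → V → ℝ} {q W : V → ℝ} {u : V → ℕ → ℝ}

theorem IsWave.eq_zero_of_forall_adj_notMem (hu : IsWave G B μ g q W u)
    (hμ : ∀ v, 0 < μ v) (hgpos : ∀ a b, G.Adj a b → 0 < g a b) {w : V} (hw : w ∈ B) {t : ℕ}
    (hex : ∃ v, G.Adj v w ∧ v ∉ B) (hv : ∀ v, G.Adj v w → v ∉ B → u v t = 0) : u w t = 0 :=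
  eq_zero_of_nder_eq_zero (f := fun v => u v t) (hμ w) (fun v hvw => hgpos v w hvw) hex hv
    (hu.2.1 w hw t)

theorem IsWave.eq_zero_succ_succ (hu : IsWave G B μ g q W u) {y : V} (hy : y ∉ B) {s : ℕ}
    (h₀ : u y s = 0) (h₁ : u y (s + 1) = 0) (hnbr : ∀ w, G.Adj y w → u w (s + 1) = 0) :
    u y (s + 2) = 0 := by
  have h := hu.1 y hy (s + 1) (by omega)
  rw [lap_eq_zero_of_forall_adj μ g h₁ hnbr, h₁, Nat.add_sub_cancel] at h
  simpa [h₀] using h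

theorem IsWave.eq_zero_of_adj_of_ball (hu : IsWave G B μ g q W u)
    (hμ : ∀ v, 0 < μ v) (hgpos : ∀ a b, G.Adj a b → 0 < g a b)
    (hadj : ∀ z ∈ B, ∀ a b : V, a ∉ B → b ∉ B → G.Adj a z → G.Adj b z → a ≠ b → G.Adj a b)
    {z y : V} {t r : ℕ} (hy : y ∉ B) (hyr : (reduced G B).dist z y < r)
    (hball : ∀ v, v ∉ B → (reduced G B).dist z v ≤ r → u v t = 0) :
    ∀ w, G.Adj y w → u w t = 0 := by
  intro w hyw
  by_cases hw : w ∈ B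
  · refine hu.eq_zero_of_forall_adj_notMem hμ hgpos hw ⟨y, hyw, hy⟩ fun v hvw hv => hball v hv ?_
    have := reduced_dist_le_add_one_of_adj_of_adj hadj z hw hy hv hyw hvw
    omega
  · refine hball w hw ?_
    have := SimpleGraph.Adj.diff_dist_adj (u := z) (show (reduced G B).Adj y w from ⟨hyw, .inl hy⟩)
    omega

/-- `t - 1` truncates at `t = 0`: the ball has radius `r` at times `0` and `1`. -/
theorem IsWave.eq_zero_of_ball (hu : IsWave G B μ g q W u)
    (hμ : ∀ v, 0 < μ v) (hgpos : ∀ a b, G.Adj a b → 0 < g a b)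
    (hadj : ∀ z ∈ B, ∀ a b : V, a ∉ B → b ∉ B → G.Adj a z → G.Adj b z → a ≠ b → G.Adj a b)
    {z : V} {r : ℕ} (hW : ∀ y, y ∉ B → (reduced G B).dist z y ≤ r → W y = 0) :
    ∀ t y, y ∉ B → t - 1 + (reduced G B).dist z y ≤ r → u y t = 0
  | 0, y, hy, hyr => (hu.2.2.2 y).trans (hW y hy (by omega))
  | 1, y, hy, hyr => (hu.2.2.1 y hy).trans <| (hu.2.2.2 y).trans (hW y hy (by omega))
  | s + 2, y, hy, hyr => by
    refine hu.eq_zero_succ_succ hy (hu.eq_zero_of_ball hμ hgpos hadj hW s y hy (by omega))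
      (hu.eq_zero_of_ball hμ hgpos hadj hW (s + 1) y hy (by omega)) ?_
    exact hu.eq_zero_of_adj_of_ball hμ hgpos hadj (z := z) hy (r := r - s) (by omega)
      fun v hv hvr => hu.eq_zero_of_ball hμ hgpos hadj hW (s + 1) v hv (by omega)

end IsWave

theorem wavefront_zero_general (G : SimpleGraph V) [DecidableRel G.Adj] (B : Finset V)
    (μ : V → ℝ) (g : V → V → ℝ) (q : V → ℝ)
    (hμ : ∀ v, 0 < μ v)
    (hgpos : ∀ a b, G.Adj a b → 0 < g a b)
    (hconnre : (reduced G B).Connected)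
    (hadj : ∀ z ∈ B, ∀ a b : V, a ∉ B → b ∉ B → G.Adj a z → G.Adj b z → a ≠ b → G.Adj a b)
    (x z : V) (hx : x ∉ B) (hz : z ∈ B)
    (W : V → ℝ)
    (hWz : W z = 0)
    (hWball : ∀ y, y ∉ B → (reduced G B).dist z y ≤ (reduced G B).dist x z → W y = 0)
    (u : V → ℕ → ℝ) (hu : IsWave G B μ g q W u) :
    ∀ t, t ≤ (reduced G B).dist x z → u z t = 0 := by
  rintro (_ | s) hs
  · exact (hu.2.2.2 z).trans hWz
  · refine hu.eq_zero_of_forall_adj_notMem hμ hgpos hz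
      (exists_adj_notMem_of_reduced_reachable (hconnre z x) hz hx) fun v hvz hv => ?_
    have hdist : (reduced G B).dist z v = 1 :=
      SimpleGraph.dist_eq_one_iff_adj.mpr ⟨hvz.symm, .inr hv⟩
    exact hu.eq_zero_of_ball hμ hgpos hadj hWball (s + 1) v hv (by omega)

/-- Wavefront lemma, second part: if the initial value vanishes on the whole interior
ball of radius `t₀ = d_re(x,z)` around `z` (and at `z`), then the wave vanishes at `z`
for all times `t ≤ t₀`. -/
theorem wavefront_zero (G : SimpleGraph V) [DecidableRel G.Adj] (B : Finset V)
    (μ : V → ℝ) (g : V → V → ℝ) (q : V → ℝ)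
    (hμ : ∀ v, 0 < μ v)
    (hgpos : ∀ a b, G.Adj a b → 0 < g a b)
    (hgsymm : ∀ a b, g a b = g b a)
    (hconn : G.Connected)
    (hconnre : (reduced G B).Connected)
    (hadj : ∀ z ∈ B, ∀ a b : V, a ∉ B → b ∉ B → G.Adj a z → G.Adj b z → a ≠ b → G.Adj a b)
    (x z : V) (hx : x ∉ B) (hz : z ∈ B)
    (W : V → ℝ)
    (hWn : ∀ w ∈ B, nder G B μ g W w = 0)
    (hWz : W z = 0)
    (hWball : ∀ y, y ∉ B → (reduced G B).dist z y ≤ (reduced G B).dist x z → W y = 0)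
    (u : V → ℕ → ℝ) (hu : IsWave G B μ g q W u) :
    ∀ t, t ≤ (reduced G B).dist x z → u z t = 0 :=
  wavefront_zero_general G B μ g q hμ hgpos hconnre hadj x z hx hz W hWz hWball u hu
end

section
/- Positivity at extreme points: let W be an initial value with d_nu W|_{∂G} = 0 such that for every boundary vertex z the first nonzero value u^W(z, t^W_z) of the wave at z is positive. If x0 is an extreme point of supp(W) ∩ G with respect to ∂G, then W(x0) > 0. -/
/-!
Take the explicit Neumann wave, whose boundary values are the weighted means of the interior
neighbours forced by `nder = 0`. Because interior neighbours of a boundary vertex are adjacent,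
the wave moves one step of reduced distance per time step: at an interior `x` it vanishes up
to time `d(x, supp W)`. If moreover `x₀` is the unique support point nearest to `x`, at
distance `n`, then `u(x, n + 1)` has the sign of `W x₀`: by induction on `n`, since `u(x, n)`
and `u(x, n + 1)` vanish, `u(x, n + 2)` is the Laplacian, a positive combination of neighbour
values that are zero or of the sign of `W x₀`, one of them (a neighbour nearer to `x₀`)
nonzero. The same holds at a boundary vertex `z` witnessing that `x₀` is extreme, where the
first nonzero value `u(z, d(z, x₀))` is a mean over interior neighbours; by hypothesis it is
positive, hence so is `W x₀`.
-/

open Finset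

variable {V : Type*} [Fintype V] [DecidableEq V]

namespace SimpleGraph

variable {α : Type*} {H : SimpleGraph α} {x p s : α} {n : ℕ}

lemma edist_le_edist_add_one (hxp : H.edist x p ≤ 1) : H.edist x s ≤ H.edist p s + 1 :=
  calc H.edist x s ≤ H.edist x p + H.edist p s := H.edist_triangle
    _ ≤ H.edist p s + 1 := by rw [add_comm]; gcongr

lemma lt_edist_of_edist_le_one (hxp : H.edist x p ≤ 1) (h : (n + 1 : ℕ∞) < H.edist x s) :
    (n : ℕ∞) < H.edist p s := by
  have := h.trans_le (edist_le_edist_add_one hxp)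
  rwa [ENat.add_lt_add_iff_right ENat.one_ne_top] at this

lemma le_edist_of_edist_le_one (hxp : H.edist x p ≤ 1) (h : (n + 1 : ℕ∞) ≤ H.edist x s) :
    (n : ℕ∞) ≤ H.edist p s := by
  have := h.trans (edist_le_edist_add_one hxp)
  rwa [ENat.add_le_add_iff_right ENat.one_ne_top] at this

lemma exists_adj_edist_eq_of_edist_eq_add_one (h : H.edist x s = n + 1) :
    ∃ y, H.Adj x y ∧ H.edist y s = n := by
  obtain ⟨w, hw⟩ := exists_walk_of_edist_eq_coe (k := n + 1) (by exact_mod_cast h)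
  cases w with
  | nil => simp at hw
  | @cons _ y _ hxy w =>
    refine ⟨y, hxy, le_antisymm ?_ ?_⟩
    · simpa [Nat.succ_inj.mp hw] using edist_le w
    · exact le_edist_of_edist_le_one (edist_eq_one_iff_adj.2 hxy).le h.ge

end SimpleGraph

def InteriorNbrsAdj {α : Type*} (G : SimpleGraph α) (B : Finset α) : Prop :=
  ∀ z ∈ B, ∀ a b : α, a ∉ B → b ∉ B → G.Adj a z → G.Adj b z → a ≠ b → G.Adj a b

section Reduced

variable {α : Type*} {G : SimpleGraph α} {B : Finset α} {x y z x₀ : α}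

lemma reduced_adj_of_notMem (hx : x ∉ B) (h : G.Adj x y) : (reduced G B).Adj x y :=
  ⟨h, Or.inl hx⟩

lemma notMem_of_reduced_adj_of_mem (hx : x ∈ B) (h : (reduced G B).Adj x y) : y ∉ B :=
  h.2.resolve_left (not_not_intro hx)

lemma exists_interior_adj_reduced_edist_eq (hadj : InteriorNbrsAdj G B) (hx₀ : x₀ ∉ B) {n : ℕ}
    (h : (reduced G B).edist x x₀ = n + 1) :
    ∃ y, y ∉ B ∧ G.Adj x y ∧ (reduced G B).edist y x₀ = n := by
  obtain ⟨y, hxy, hy⟩ := SimpleGraph.exists_adj_edist_eq_of_edist_eq_add_one h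
  by_cases hyB : y ∈ B
  · exfalso
    have hx : x ∉ B := notMem_of_reduced_adj_of_mem hyB hxy.symm
    obtain ⟨m, rfl⟩ : ∃ m, n = m + 1 := Nat.exists_eq_add_one.2 <| Nat.pos_of_ne_zero fun hn => by
      subst hn; exact hx₀ (SimpleGraph.edist_eq_zero_iff.1 hy ▸ hyB)
    obtain ⟨y', hyy', hy'⟩ :=
      SimpleGraph.exists_adj_edist_eq_of_edist_eq_add_one (by exact_mod_cast hy)
    have hy'B := notMem_of_reduced_adj_of_mem hyB hyy'
    have hxy' : x ≠ y' := by
      rintro rfl; rw [h] at hy'; norm_cast at hy'; omega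
    -- a boundary vertex between two interior vertices can be skipped
    have hshort : (reduced G B).Adj x y' :=
      reduced_adj_of_notMem hx (hadj y hyB x y' hx hy'B hxy.1 hyy'.1.symm hxy')
    have := SimpleGraph.lt_edist_of_edist_le_one (SimpleGraph.edist_eq_one_iff_adj.2 hshort).le
      (n := m) (s := x₀) (by rw [h]; norm_cast; omega)
    rw [hy'] at this
    exact lt_irrefl _ this
  · exact ⟨y, hyB, hxy.1, hy⟩

lemma exists_mem_reduced_reachable (hconn : G.Connected) (hz : z ∈ B) (hx : x ∉ B) :
    ∃ z' ∈ B, (reduced G B).Reachable z' x := by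
  obtain ⟨d, -, hd, hd'⟩ := (hconn x z).some.exists_boundary_dart
    {v | v ∉ B ∧ (reduced G B).Reachable x v} ⟨hx, .rfl⟩ fun h => h.1 hz
  have hreach : (reduced G B).Reachable x d.snd :=
    hd.2.trans (reduced_adj_of_notMem hd.1 d.adj).reachable
  exact ⟨d.snd, by_contra fun h => hd' ⟨h, hreach⟩, hreach.symm⟩

end Reduced

def interiorNbrs (G : SimpleGraph V) [DecidableRel G.Adj] (B : Finset V) (z : V) : Finset V :=
  univ.filter fun p => G.Adj p z ∧ p ∉ B

/-- At a boundary vertex, the weighted mean that makes the normal derivative `nder` vanish. -/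
noncomputable def neumannFill (G : SimpleGraph V) [DecidableRel G.Adj] (B : Finset V)
    (g : V → V → ℝ) (v : V → ℝ) (x : V) : ℝ :=
  if x ∈ B then (interiorNbrs G B x).centerMass (fun p => g p x) v else v x

noncomputable def neumannWave (G : SimpleGraph V) [DecidableRel G.Adj] (B : Finset V)
    (μ : V → ℝ) (g : V → V → ℝ) (q : V → ℝ) (W : V → ℝ) : ℕ → V → ℝ
  | 0 => W
  | 1 => neumannFill G B g W
  | t + 2 => neumannFill G B g fun x =>
      2 * neumannWave G B μ g q W (t + 1) x - neumannWave G B μ g q W t x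
        + lap G μ g (neumannWave G B μ g q W (t + 1)) x - q x * neumannWave G B μ g q W (t + 1) x

section NeumannFill

variable {G : SimpleGraph V} [DecidableRel G.Adj] {B : Finset V} {g : V → V → ℝ}
  {v : V → ℝ} {x y z : V}

lemma mem_interiorNbrs {p : V} : p ∈ interiorNbrs G B z ↔ G.Adj p z ∧ p ∉ B := by
  simp [interiorNbrs]

lemma edist_le_one_of_mem_interiorNbrs {p : V} (hp : p ∈ interiorNbrs G B z) :
    (reduced G B).edist z p ≤ 1 :=
  (SimpleGraph.edist_eq_one_iff_adj.2 (show (reduced G B).Adj z p from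
    ⟨(mem_interiorNbrs.1 hp).1.symm, Or.inr (mem_interiorNbrs.1 hp).2⟩)).le

lemma interiorNbrs_nonempty (hBint : ∀ z ∈ B, ∃ p, p ∉ B ∧ G.Adj p z) (hz : z ∈ B) :
    (interiorNbrs G B z).Nonempty :=
  let ⟨p, hp, hpz⟩ := hBint z hz
  ⟨p, mem_interiorNbrs.2 ⟨hpz, hp⟩⟩

lemma neumannFill_of_notMem (hx : x ∉ B) (v : V → ℝ) : neumannFill G B g v x = v x := by
  simp [neumannFill, hx]

lemma neumannFill_of_mem (hx : x ∈ B) (v : V → ℝ) :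
    neumannFill G B g v x = (interiorNbrs G B x).centerMass (fun p => g p x) v := by
  simp [neumannFill, hx]

lemma sum_interiorNbrs_weight_pos (hgpos : ∀ a b, G.Adj a b → 0 < g a b)
    (hne : (interiorNbrs G B z).Nonempty) :
    0 < ∑ p ∈ interiorNbrs G B z, g p z :=
  sum_pos (fun _ hp => hgpos _ _ (mem_interiorNbrs.1 hp).1) hne

lemma nder_neumannFill (hgpos : ∀ a b, G.Adj a b → 0 < g a b)
    (hBint : ∀ z ∈ B, ∃ p, p ∉ B ∧ G.Adj p z) (μ : V → ℝ) (hz : z ∈ B) (v : V → ℝ) :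
    nder G B μ g (neumannFill G B g v) z = 0 := by
  have hw := (sum_interiorNbrs_weight_pos hgpos (interiorNbrs_nonempty hBint hz)).ne'
  have hsum : ∑ p ∈ interiorNbrs G B z, g p z * (neumannFill G B g v p - neumannFill G B g v z)
      = 0 := by
    rw [neumannFill_of_mem hz, centerMass]
    simp only [smul_eq_mul]
    rw [sum_congr rfl fun p hp => by rw [neumannFill_of_notMem (mem_interiorNbrs.1 hp).2]]
    simp only [mul_sub, sum_sub_distrib, ← sum_mul]
    field_simp
    ring
  exact mul_eq_zero_of_right _ hsum

lemma neumannFill_mem (hgpos : ∀ a b, G.Adj a b → 0 < g a b) {S : Set ℝ} (hS : Convex ℝ S)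
    (hz : z ∈ B) (hne : (interiorNbrs G B z).Nonempty) (h : ∀ p ∈ interiorNbrs G B z, v p ∈ S) :
    neumannFill G B g v z ∈ S := by
  rw [neumannFill_of_mem hz]
  exact hS.centerMass_mem (fun _ hp => (hgpos _ _ (mem_interiorNbrs.1 hp).1).le)
    (sum_interiorNbrs_weight_pos hgpos hne) h

lemma mul_neumannFill_pos (hgpos : ∀ a b, G.Adj a b → 0 < g a b) {c : ℝ} (hz : z ∈ B)
    (hnonneg : ∀ p ∈ interiorNbrs G B z, 0 ≤ c * v p)
    (hpos : ∃ p ∈ interiorNbrs G B z, 0 < c * v p) : 0 < c * neumannFill G B g v z := by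
  obtain ⟨p₀, hp₀, hp₀pos⟩ := hpos
  have hw := sum_interiorNbrs_weight_pos hgpos ⟨p₀, hp₀⟩
  have hmul : c * neumannFill G B g v z = (∑ p ∈ interiorNbrs G B z, g p z)⁻¹ *
      ∑ p ∈ interiorNbrs G B z, g p z * (c * v p) := by
    simp only [neumannFill_of_mem hz, centerMass, smul_eq_mul, mul_sum]
    exact sum_congr rfl fun _ _ => by ring
  rw [hmul]
  refine mul_pos (inv_pos.2 hw) (sum_pos' (fun p hp => ?_) ⟨p₀, hp₀, ?_⟩)
  · exact mul_nonneg (hgpos _ _ (mem_interiorNbrs.1 hp).1).le (hnonneg p hp)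
  · exact mul_pos (hgpos _ _ (mem_interiorNbrs.1 hp₀).1) hp₀pos

lemma neumannFill_mem_of_adj (hgpos : ∀ a b, G.Adj a b → 0 < g a b) (hadj : InteriorNbrsAdj G B)
    {S : Set ℝ} (hS : Convex ℝ S) (hx : x ∉ B) (hxy : G.Adj x y)
    (h : ∀ p, p ∉ B → (reduced G B).edist x p ≤ 1 → neumannFill G B g v p ∈ S) :
    neumannFill G B g v y ∈ S := by
  by_cases hy : y ∈ B
  · refine neumannFill_mem hgpos hS hy ⟨x, mem_interiorNbrs.2 ⟨hxy, hx⟩⟩ fun p hp => ?_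
    obtain ⟨hpy, hpB⟩ := mem_interiorNbrs.1 hp
    have hxp : (reduced G B).edist x p ≤ 1 := by
      refine SimpleGraph.edist_le_one_iff_adj_or_eq.2 ?_
      by_cases hpx : x = p
      · exact .inr hpx
      · exact .inl (reduced_adj_of_notMem hx (hadj y hy x p hx hpB hxy hpy hpx))
    simpa [neumannFill_of_notMem hpB] using h p hpB hxp
  · exact h y hy (SimpleGraph.edist_eq_one_iff_adj.2 (reduced_adj_of_notMem hx hxy)).le

end NeumannFill

section Laplacian

variable {α : Type*} [Fintype α] {G : SimpleGraph α} [DecidableRel G.Adj] {μ : α → ℝ}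
  {g : α → α → ℝ} {u : α → ℝ} {x : α}

lemma lap_const_mul (c : ℝ) : lap G μ g (fun y => c * u y) x = c * lap G μ g u x := by
  simp only [lap, mul_sum]
  exact sum_congr rfl fun _ _ => by ring

lemma lap_eq_zero_of_forall_adj_eq (h : ∀ y, G.Adj x y → u y = u x) : lap G μ g u x = 0 := by
  refine mul_eq_zero_of_right _ (sum_eq_zero fun y hy => ?_)
  rw [h y (mem_filter.1 hy).2, sub_self, mul_zero]

lemma lap_pos_of_forall_adj_le (hμ : 0 < μ x) (hgpos : ∀ y, G.Adj x y → 0 < g x y)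
    (hle : ∀ y, G.Adj x y → u x ≤ u y) (hlt : ∃ y, G.Adj x y ∧ u x < u y) :
    0 < lap G μ g u x := by
  obtain ⟨y, hxy, hy⟩ := hlt
  refine mul_pos (inv_pos.2 hμ) (sum_pos' (fun y hy => ?_) ⟨y, mem_filter.2 ⟨mem_univ y, hxy⟩, ?_⟩)
  · exact mul_nonneg (hgpos y (mem_filter.1 hy).2).le (sub_nonneg.2 (hle y (mem_filter.1 hy).2))
  · exact mul_pos (hgpos y hxy) (sub_pos.2 hy)

end Laplacian

lemma neumannWave_succ_eq_neumannFill (G : SimpleGraph V) [DecidableRel G.Adj] (B : Finset V)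
    (μ : V → ℝ) (g : V → V → ℝ) (q : V → ℝ) (W : V → ℝ) (t : ℕ) :
    ∃ v, neumannWave G B μ g q W (t + 1) = neumannFill G B g v := by
  cases t <;> exact ⟨_, rfl⟩

section NeumannWave

variable {G : SimpleGraph V} [DecidableRel G.Adj] {B : Finset V} {μ : V → ℝ} {g : V → V → ℝ}
  {q : V → ℝ} {W : V → ℝ} {x : V}

lemma neumannWave_one_of_notMem (hx : x ∉ B) : neumannWave G B μ g q W 1 x = W x :=
  neumannFill_of_notMem hx W

lemma neumannWave_add_two_of_notMem (hx : x ∉ B) (t : ℕ) :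
    neumannWave G B μ g q W (t + 2) x =
      2 * neumannWave G B μ g q W (t + 1) x - neumannWave G B μ g q W t x
        + lap G μ g (neumannWave G B μ g q W (t + 1)) x - q x * neumannWave G B μ g q W (t + 1) x :=
  neumannFill_of_notMem hx _

lemma isWave_neumannWave (hgpos : ∀ a b, G.Adj a b → 0 < g a b)
    (hBint : ∀ z ∈ B, ∃ p, p ∉ B ∧ G.Adj p z) (hWn : ∀ z ∈ B, nder G B μ g W z = 0) :
    IsWave G B μ g q W fun x t => neumannWave G B μ g q W t x := by
  refine ⟨fun x hx t ht => ?_, fun z hz t => ?_, fun x hx => neumannWave_one_of_notMem hx,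
    fun x => rfl⟩
  · obtain ⟨t, rfl⟩ := Nat.exists_eq_add_of_le' ht
    simp only [Nat.add_sub_cancel, neumannWave_add_two_of_notMem hx]
    ring
  · cases t with
    | zero => exact hWn z hz
    | succ t =>
      obtain ⟨v, hv⟩ := neumannWave_succ_eq_neumannFill G B μ g q W t
      change nder G B μ g (neumannWave G B μ g q W (t + 1)) z = 0
      rw [hv]
      exact nder_neumannFill hgpos hBint μ hz v

lemma neumannWave_succ_mem_of_adj (hgpos : ∀ a b, G.Adj a b → 0 < g a b)
    (hadj : InteriorNbrsAdj G B) {S : Set ℝ} (hS : Convex ℝ S) {t : ℕ} {y : V} (hx : x ∉ B)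
    (hxy : G.Adj x y)
    (h : ∀ p, p ∉ B → (reduced G B).edist x p ≤ 1 → neumannWave G B μ g q W (t + 1) p ∈ S) :
    neumannWave G B μ g q W (t + 1) y ∈ S := by
  obtain ⟨v, hv⟩ := neumannWave_succ_eq_neumannFill G B μ g q W t
  rw [hv] at h ⊢
  exact neumannFill_mem_of_adj hgpos hadj hS hx hxy h

end NeumannWave

def IsUniqueNearest {α : Type*} (G : SimpleGraph α) (B : Finset α) (W : α → ℝ) (x x₀ : α)
    (n : ℕ) : Prop :=
  (reduced G B).edist x x₀ = n ∧
    ∀ s, s ∉ B → W s ≠ 0 → s ≠ x₀ → (n : ℕ∞) < (reduced G B).edist x s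

namespace IsUniqueNearest

variable {α : Type*} {G : SimpleGraph α} {B : Finset α} {W : α → ℝ} {x x₀ p : α} {n : ℕ}

lemma eq_of_zero (h : IsUniqueNearest G B W x x₀ 0) : x = x₀ :=
  SimpleGraph.edist_eq_zero_iff.1 h.1

lemma lt_edist (h : IsUniqueNearest G B W x x₀ n) {m : ℕ} (hm : m < n) :
    ∀ s, s ∉ B → W s ≠ 0 → (m : ℕ∞) < (reduced G B).edist x s := by
  intro s hs hWs
  have hm' : (m : ℕ∞) < n := by exact_mod_cast hm
  by_cases hsx : s = x₀
  · rw [hsx, h.1]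
    exact hm'
  · exact hm'.trans (h.2 s hs hWs hsx)

lemma of_edist_le_one (h : IsUniqueNearest G B W x x₀ (n + 1))
    (hxp : (reduced G B).edist x p ≤ 1) (hp : (reduced G B).edist p x₀ = n) :
    IsUniqueNearest G B W p x₀ n :=
  ⟨hp, fun s hs hWs hsx =>
    SimpleGraph.lt_edist_of_edist_le_one hxp (by exact_mod_cast h.2 s hs hWs hsx)⟩

end IsUniqueNearest

section Propagation

variable {G : SimpleGraph V} [DecidableRel G.Adj] {B : Finset V} {μ : V → ℝ} {g : V → V → ℝ}
  {q : V → ℝ} {W : V → ℝ} {x₀ : V}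

lemma neumannWave_eq_zero_of_lt_edist (hgpos : ∀ a b, G.Adj a b → 0 < g a b)
    (hadj : InteriorNbrsAdj G B) (t : ℕ) {x : V} (hx : x ∉ B)
    (hfar : ∀ s, s ∉ B → W s ≠ 0 → (t : ℕ∞) < (reduced G B).edist x s) :
    neumannWave G B μ g q W t x = 0 ∧ neumannWave G B μ g q W (t + 1) x = 0 := by
  induction t generalizing x with
  | zero =>
    have hWx : W x = 0 := by
      by_contra h
      simpa using hfar x hx h
    exact ⟨hWx, (neumannWave_one_of_notMem hx).trans hWx⟩
  | succ t ih =>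
    have hnear : ∀ p, p ∉ B → (reduced G B).edist x p ≤ 1 →
        neumannWave G B μ g q W (t + 1) p = 0 := fun p hp hxp =>
      (ih hp fun s hs hWs =>
        SimpleGraph.lt_edist_of_edist_le_one hxp (by exact_mod_cast hfar s hs hWs)).2
    have hx₁ := hnear x hx (by simp)
    have hx₀ := (ih hx fun s hs hWs =>
      (Nat.cast_lt.2 (Nat.lt_succ_self t)).trans (hfar s hs hWs)).1
    refine ⟨hx₁, ?_⟩
    rw [neumannWave_add_two_of_notMem hx, hx₀, hx₁, lap_eq_zero_of_forall_adj_eq]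
    · ring
    · intro y hxy
      rw [hx₁]
      exact neumannWave_succ_mem_of_adj hgpos hadj (convex_singleton 0) hx hxy hnear

lemma neumannWave_succ_eq_zero_of_mem (hgpos : ∀ a b, G.Adj a b → 0 < g a b)
    (hadj : InteriorNbrsAdj G B) (hBint : ∀ z ∈ B, ∃ p, p ∉ B ∧ G.Adj p z) {z : V} (hz : z ∈ B)
    {t : ℕ}
    (hfar : ∀ s, s ∉ B → W s ≠ 0 → (t + 1 : ℕ∞) < (reduced G B).edist z s) :
    neumannWave G B μ g q W (t + 1) z = 0 := by
  obtain ⟨v, hv⟩ := neumannWave_succ_eq_neumannFill G B μ g q W t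
  rw [hv]
  refine neumannFill_mem hgpos (convex_singleton 0) hz (interiorNbrs_nonempty hBint hz)
    fun p hp => ?_
  have hpB := (mem_interiorNbrs.1 hp).2
  rw [show v p = neumannWave G B μ g q W (t + 1) p by rw [hv, neumannFill_of_notMem hpB]]
  exact (neumannWave_eq_zero_of_lt_edist hgpos hadj t hpB fun s hs hWs =>
    SimpleGraph.lt_edist_of_edist_le_one (edist_le_one_of_mem_interiorNbrs hp)
      (hfar s hs hWs)).2

end Propagation

section Arrival

variable {G : SimpleGraph V} [DecidableRel G.Adj] {B : Finset V} {μ : V → ℝ} {g : V → V → ℝ}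
  {q : V → ℝ} {W : V → ℝ} {x₀ : V}

lemma mul_neumannWave_nonneg_of_edist_le_one (hgpos : ∀ a b, G.Adj a b → 0 < g a b)
    (hadj : InteriorNbrsAdj G B) {n : ℕ} (harrive : ∀ p, p ∉ B → IsUniqueNearest G B W p x₀ n →
      0 < W x₀ * neumannWave G B μ g q W (n + 1) p)
    {x p : V} (hx : IsUniqueNearest G B W x x₀ (n + 1)) (hp : p ∉ B)
    (hxp : (reduced G B).edist x p ≤ 1) :
    0 ≤ W x₀ * neumannWave G B μ g q W (n + 1) p := by
  by_cases hpn : (reduced G B).edist p x₀ = n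
  · exact (harrive p hp (hx.of_edist_le_one hxp hpn)).le
  · have hfar : ∀ s, s ∉ B → W s ≠ 0 → (n : ℕ∞) < (reduced G B).edist p s := by
      intro s hs hWs
      by_cases hsx : s = x₀
      · rw [hsx]
        exact lt_of_le_of_ne
          (SimpleGraph.le_edist_of_edist_le_one hxp (by exact_mod_cast hx.1.ge)) (Ne.symm hpn)
      · exact SimpleGraph.lt_edist_of_edist_le_one hxp (by exact_mod_cast hx.2 s hs hWs hsx)
    rw [(neumannWave_eq_zero_of_lt_edist hgpos hadj n hp hfar).2, mul_zero]

lemma exists_adj_mul_neumannWave_pos (hadj : InteriorNbrsAdj G B) (hx₀ : x₀ ∉ B) {n : ℕ}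
    (harrive : ∀ p, p ∉ B → IsUniqueNearest G B W p x₀ n →
      0 < W x₀ * neumannWave G B μ g q W (n + 1) p)
    {x : V} (hx : IsUniqueNearest G B W x x₀ (n + 1)) :
    ∃ p, p ∉ B ∧ G.Adj x p ∧ 0 < W x₀ * neumannWave G B μ g q W (n + 1) p := by
  obtain ⟨p, hp, hxp, hpn⟩ :=
    exists_interior_adj_reduced_edist_eq hadj hx₀ (by exact_mod_cast hx.1)
  have hxp' : (reduced G B).edist x p ≤ 1 :=
    (SimpleGraph.edist_eq_one_iff_adj.2 (show (reduced G B).Adj x p from ⟨hxp, .inr hp⟩)).le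
  exact ⟨p, hp, hxp, harrive p hp (hx.of_edist_le_one hxp' hpn)⟩

lemma mul_neumannWave_pos_of_notMem (hμ : ∀ v, 0 < μ v) (hgpos : ∀ a b, G.Adj a b → 0 < g a b)
    (hadj : InteriorNbrsAdj G B) (hx₀ : x₀ ∉ B) (hWx₀ : W x₀ ≠ 0) (n : ℕ) :
    ∀ x, x ∉ B → IsUniqueNearest G B W x x₀ n → 0 < W x₀ * neumannWave G B μ g q W (n + 1) x := by
  induction n with
  | zero =>
    intro x hx h
    obtain rfl := h.eq_of_zero
    rw [neumannWave_one_of_notMem hx]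
    exact mul_self_pos.2 hWx₀
  | succ n ih =>
    intro x hx h
    obtain ⟨p, -, hxp, hp⟩ := exists_adj_mul_neumannWave_pos hadj hx₀ ih h
    obtain ⟨h₀, h₁⟩ :=
      neumannWave_eq_zero_of_lt_edist hgpos hadj n hx (h.lt_edist (lt_add_one n))
    have hlap : neumannWave G B μ g q W (n + 2) x =
        lap G μ g (neumannWave G B μ g q W (n + 1)) x := by
      rw [neumannWave_add_two_of_notMem hx, h₀, h₁]
      ring
    rw [hlap, ← lap_const_mul]
    refine lap_pos_of_forall_adj_le (hμ x) (hgpos x) (fun y hxy => ?_)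
      ⟨p, hxp, by simpa [h₁] using hp⟩
    rw [h₁, mul_zero]
    exact neumannWave_succ_mem_of_adj hgpos hadj
      (convex_halfSpace_ge (LinearMap.mulLeft ℝ (W x₀)).isLinear 0) hx hxy
      fun p hp hxp => mul_neumannWave_nonneg_of_edist_le_one hgpos hadj ih h hp hxp

lemma mul_neumannWave_pos_of_mem (hμ : ∀ v, 0 < μ v) (hgpos : ∀ a b, G.Adj a b → 0 < g a b)
    (hadj : InteriorNbrsAdj G B) (hx₀ : x₀ ∉ B) (hWx₀ : W x₀ ≠ 0) {z : V} (hz : z ∈ B) {e : ℕ}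
    (h : IsUniqueNearest G B W z x₀ (e + 1)) :
    0 < W x₀ * neumannWave G B μ g q W (e + 1) z := by
  have harrive := mul_neumannWave_pos_of_notMem (q := q) hμ hgpos hadj hx₀ hWx₀ e
  have hnear := fun p => mul_neumannWave_nonneg_of_edist_le_one (p := p) hgpos hadj harrive h
  obtain ⟨p, hp, hzp, hpos⟩ := exists_adj_mul_neumannWave_pos hadj hx₀ harrive h
  obtain ⟨v, hv⟩ := neumannWave_succ_eq_neumannFill G B μ g q W e
  rw [hv] at hnear hpos ⊢
  refine mul_neumannFill_pos hgpos hz (fun p hp' => ?_)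
    ⟨p, mem_interiorNbrs.2 ⟨hzp.symm, hp⟩, ?_⟩
  · have hpB := (mem_interiorNbrs.1 hp').2
    simpa [neumannFill_of_notMem hpB] using
      hnear p hpB (edist_le_one_of_mem_interiorNbrs hp')
  · simpa [neumannFill_of_notMem hp] using hpos

end Arrival

lemma exists_mem_isUniqueNearest {α : Type*} {G : SimpleGraph α} {B : Finset α} {W : α → ℝ}
    {x₀ : α} (hconn : G.Connected) (hx₀ : x₀ ∉ B)
    (hext : ∃ z ∈ B, ∀ y, y ∉ B → W y ≠ 0 → y ≠ x₀ →
      (reduced G B).edist z x₀ < (reduced G B).edist z y) :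
    ∃ z ∈ B, ∃ e : ℕ, IsUniqueNearest G B W z x₀ (e + 1) := by
  obtain ⟨z, hz, hzx⟩ := hext
  -- if `x₀` is not reduced-reachable from `z`, then `x₀` is the whole interior support
  obtain ⟨z, hz, hfin, hzx⟩ : ∃ z ∈ B, (reduced G B).edist z x₀ ≠ ⊤ ∧ ∀ y, y ∉ B → W y ≠ 0 →
      y ≠ x₀ → (reduced G B).edist z x₀ < (reduced G B).edist z y := by
    by_cases htop : (reduced G B).edist z x₀ = ⊤
    · obtain ⟨z', hz', hreach⟩ := exists_mem_reduced_reachable hconn hz hx₀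
      refine ⟨z', hz', SimpleGraph.edist_ne_top_iff_reachable.2 hreach, fun y hy hWy hyx => ?_⟩
      simpa [htop] using hzx y hy hWy hyx
    · exact ⟨z, hz, htop, hzx⟩
  obtain ⟨m, hm⟩ := ENat.ne_top_iff_exists.1 hfin
  obtain ⟨e, rfl⟩ : ∃ e, m = e + 1 := Nat.exists_eq_add_one.2 <| Nat.pos_of_ne_zero fun h0 => by
    subst h0
    exact hx₀ (SimpleGraph.edist_eq_zero_iff.1 hm.symm ▸ hz)
  exact ⟨z, hz, e, hm.symm, fun y hy hWy hyx => hm ▸ hzx y hy hWy hyx⟩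

theorem positivity_at_extreme_general (G : SimpleGraph V) [DecidableRel G.Adj] (B : Finset V)
    (μ : V → ℝ) (g : V → V → ℝ) (q : V → ℝ)
    (hμ : ∀ v, 0 < μ v)
    (hgpos : ∀ a b, G.Adj a b → 0 < g a b)
    (hconn : G.Connected)
    (hadj : ∀ z ∈ B, ∀ a b : V, a ∉ B → b ∉ B → G.Adj a z → G.Adj b z → a ≠ b → G.Adj a b)
    (hBint : ∀ z ∈ B, ∃ p, p ∉ B ∧ G.Adj p z)
    (W : V → ℝ)
    (hWn : ∀ z ∈ B, nder G B μ g W z = 0)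
    (hpos : ∀ u : V → ℕ → ℝ, IsWave G B μ g q W u → ∀ z ∈ B, ∀ T : ℕ,
      IsLeast {t : ℕ | 1 ≤ t ∧ u z t ≠ 0} T → 0 < u z T)
    (x₀ : V) (hx₀ : x₀ ∉ B) (hx₀supp : W x₀ ≠ 0)
    (hext : ∃ z ∈ B, ∀ y, y ∉ B → W y ≠ 0 → y ≠ x₀ →
      (reduced G B).edist z x₀ < (reduced G B).edist z y) :
    0 < W x₀ := by
  obtain ⟨z, hz, e, hnear⟩ := exists_mem_isUniqueNearest hconn hx₀ hext
  have harrival : 0 < W x₀ * neumannWave G B μ g q W (e + 1) z :=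
    mul_neumannWave_pos_of_mem hμ hgpos hadj hx₀ hx₀supp hz hnear
  have hfirst : IsLeast {t : ℕ | 1 ≤ t ∧ neumannWave G B μ g q W t z ≠ 0} (e + 1) := by
    refine ⟨⟨by omega, right_ne_zero_of_mul harrival.ne'⟩, fun t ⟨ht, hne⟩ => ?_⟩
    obtain ⟨k, rfl⟩ := Nat.exists_eq_add_of_le' ht
    by_contra hlt
    refine hne (neumannWave_succ_eq_zero_of_mem hgpos hadj hBint hz fun s hs hWs => ?_)
    exact_mod_cast hnear.lt_edist (by omega) s hs hWs
  exact pos_of_mul_pos_left harrival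
    (hpos _ (isWave_neumannWave hgpos hBint hWn) z hz _ hfirst).le

/-- Positivity at extreme points: if the wave generated by a Neumann initial value `W`
first arrives at every boundary vertex with a positive value, then `W` is positive at
every extreme point of its interior support. -/
theorem positivity_at_extreme (G : SimpleGraph V) [DecidableRel G.Adj] (B : Finset V)
    (μ : V → ℝ) (g : V → V → ℝ) (q : V → ℝ)
    (hμ : ∀ v, 0 < μ v)
    (hgpos : ∀ a b, G.Adj a b → 0 < g a b)
    (hgsymm : ∀ a b, g a b = g b a)
    (hconn : G.Connected)
    (hadj : ∀ z ∈ B, ∀ a b : V, a ∉ B → b ∉ B → G.Adj a z → G.Adj b z → a ≠ b → G.Adj a b)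
    (hBint : ∀ z ∈ B, ∃ p, p ∉ B ∧ G.Adj p z)
    (W : V → ℝ)
    (hWn : ∀ z ∈ B, nder G B μ g W z = 0)
    (hpos : ∀ u : V → ℕ → ℝ, IsWave G B μ g q W u → ∀ z ∈ B, ∀ T : ℕ,
      IsLeast {t : ℕ | 1 ≤ t ∧ u z t ≠ 0} T → 0 < u z T)
    (x₀ : V) (hx₀ : x₀ ∉ B) (hx₀supp : W x₀ ≠ 0)
    (hext : ∃ z ∈ B, ∀ y, y ∉ B → W y ≠ 0 → y ≠ x₀ →
      (reduced G B).edist z x₀ < (reduced G B).edist z y) :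
    0 < W x₀ :=
  positivity_at_extreme_general G B μ g q hμ hgpos hconn hadj hBint W hWn hpos x₀ hx₀ hx₀supp hext
end
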